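/- arXiv:2412.19690 — 6 statements merged into one kernel-verified Lean document; each statement's English description precedes it below -/
import Mathlib

section
/- Let A be an MV-algebra and γ : A → A any function. Then γ is a nucleus on A if and only if γ(a) = a ∨ γ(⊥) for all a ∈ A. -/
/-- A bounded commutative integral residuated lattice:
a bounded lattice with a commutative monoid operation `*` whose unit is `⊤`,
together with a residuum `⇨` satisfying `a * b ≤ c ↔ a ≤ b ⇨ c`. -/
class ResLat (A : Type*) extends Lattice A, BoundedOrder A, Mul A, HImp A where
  mul_comm : ∀ a b : A, a * b = b * a
  mul_assoc : ∀ a b c : A, a * b * c = a * (b * c)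
  mul_top : ∀ a : A, a * ⊤ = a
  residuation : ∀ a b c : A, a * b ≤ c ↔ a ≤ b ⇨ c

/-- A nucleus on a residuated lattice: a closure operator `γ` such that
`γ a * γ b ≤ γ (a * b)`. -/
structure IsNucleus {A : Type*} [ResLat A] (γ : A → A) : Prop where
  le_apply : ∀ a : A, a ≤ γ a
  mono : ∀ a b : A, a ≤ b → γ a ≤ γ b
  idempotent : ∀ a : A, γ (γ a) = γ a
  mul_le : ∀ a b : A, γ a * γ b ≤ γ (a * b)

/-- A BL-algebra: a residuated lattice satisfying divisibility and prelinearity. -/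
class BLAlg (A : Type*) extends ResLat A where
  div : ∀ x y : A, x ⊓ y = x * (x ⇨ y)
  prelin : ∀ x y : A, (x ⇨ y) ⊔ (y ⇨ x) = ⊤

/-- An MV-algebra: a BL-algebra satisfying the involution identity. -/
class MVAlg (A : Type*) extends BLAlg A where
  invol : ∀ x : A, (x ⇨ ⊥) ⇨ ⊥ = x

section RLLemmas
variable {A : Type*} [ResLat A]

lemma RL_res {a b c : A} : a * b ≤ c ↔ a ≤ b ⇨ c := ResLat.residuation a b c

lemma RL_mul_mono_left {a b : A} (c : A) (h : a ≤ b) : a * c ≤ b * c :=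
  RL_res.mpr (h.trans (RL_res.mp le_rfl))

lemma RL_mul_mono_right {a b : A} (c : A) (h : a ≤ b) : c * a ≤ c * b := by
  rw [ResLat.mul_comm c a, ResLat.mul_comm c b]; exact RL_mul_mono_left c h

lemma RL_mul_le_left (a b : A) : a * b ≤ a :=
  (RL_mul_mono_right a (le_top : b ≤ ⊤)).trans (le_of_eq (ResLat.mul_top a))

lemma RL_himp_mul_le (a b : A) : (a ⇨ b) * a ≤ b := RL_res.mpr le_rfl

lemma RL_curry (a b c : A) : a ⇨ (b ⇨ c) = (a * b) ⇨ c := by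
  apply le_antisymm
  · refine RL_res.mp ?_
    rw [← ResLat.mul_assoc]
    calc (a ⇨ (b ⇨ c)) * a * b ≤ (b ⇨ c) * b := RL_mul_mono_left b (RL_himp_mul_le a _)
    _ ≤ c := RL_himp_mul_le b c
  · refine RL_res.mp (RL_res.mp ?_)
    rw [ResLat.mul_assoc]
    exact RL_himp_mul_le (a * b) c

lemma RL_sup_mul_le (a b c : A) : (a ⊔ b) * c ≤ a * c ⊔ b * c :=
  RL_res.mpr (sup_le (RL_res.mp le_sup_left) (RL_res.mp le_sup_right))

end RLLemmas

section MVLemmas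
variable {A : Type*} [MVAlg A]

lemma MV_himp_eq (a b : A) : a ⇨ b = (a * (b ⇨ ⊥)) ⇨ ⊥ := by
  conv_lhs => rw [← MVAlg.invol b]
  exact RL_curry a (b ⇨ ⊥) ⊥

lemma MV_contra (a b : A) : a ⇨ b = (b ⇨ ⊥) ⇨ (a ⇨ ⊥) := by
  rw [MV_himp_eq, ResLat.mul_comm, ← RL_curry]

lemma MV_key (a b : A) : (a ⇨ b) ⇨ b = ((a ⇨ ⊥) ⊓ (b ⇨ ⊥)) ⇨ ⊥ := by
  rw [MV_himp_eq (a ⇨ b) b]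
  congr 1
  rw [MV_contra a b, ResLat.mul_comm, ← BLAlg.div]
  exact inf_comm _ _

lemma MV_sup_eq (a b : A) : a ⊔ b = (a ⇨ b) ⇨ b := by
  apply le_antisymm
  · refine sup_le (RL_res.mp ?_) (RL_res.mp (RL_mul_le_left b (a ⇨ b)))
    rw [ResLat.mul_comm]
    exact RL_himp_mul_le a b
  · have hsym : (a ⇨ b) ⇨ b = (b ⇨ a) ⇨ a := by
      rw [MV_key, MV_key, inf_comm]
    calc (a ⇨ b) ⇨ b = ((a ⇨ b) ⇨ b) * ⊤ := (ResLat.mul_top _).symm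
    _ = ((a ⇨ b) ⇨ b) * ((a ⇨ b) ⊔ (b ⇨ a)) := by rw [BLAlg.prelin]
    _ = ((a ⇨ b) ⊔ (b ⇨ a)) * ((a ⇨ b) ⇨ b) := ResLat.mul_comm _ _
    _ ≤ (a ⇨ b) * ((a ⇨ b) ⇨ b) ⊔ (b ⇨ a) * ((a ⇨ b) ⇨ b) := RL_sup_mul_le _ _ _
    _ ≤ b ⊔ a := by
        refine sup_le_sup ?_ ?_
        · rw [ResLat.mul_comm]; exact RL_himp_mul_le (a ⇨ b) b
        · rw [hsym, ResLat.mul_comm]; exact RL_himp_mul_le (b ⇨ a) a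
    _ = a ⊔ b := sup_comm _ _

end MVLemmas

/-- On an MV-algebra, `γ` is a nucleus iff `γ a = a ⊔ γ ⊥` for all `a`. -/
theorem mv_nucleus_iff {A : Type*} [MVAlg A] (γ : A → A) :
    IsNucleus γ ↔ ∀ a : A, γ a = a ⊔ γ ⊥ := by
  constructor
  · intro h a
    apply le_antisymm
    · rw [MV_sup_eq a (γ ⊥)]
      refine RL_res.mp ?_
      calc γ a * (a ⇨ γ ⊥) ≤ γ a * γ (a ⇨ γ ⊥) := RL_mul_mono_right _ (h.le_apply _)
      _ ≤ γ (a * (a ⇨ γ ⊥)) := h.mul_le _ _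
      _ = γ (a ⊓ γ ⊥) := by rw [← BLAlg.div]
      _ ≤ γ (γ ⊥) := h.mono _ _ inf_le_right
      _ = γ ⊥ := h.idempotent ⊥
    · exact sup_le (h.le_apply a) (h.mono _ _ bot_le)
  · intro h
    refine ⟨fun a => (h a) ▸ le_sup_left, fun a b hab => ?_, fun a => ?_, fun a b => ?_⟩
    · rw [h a, h b]; exact sup_le_sup_right hab _
    · rw [h (γ a), h a, sup_assoc, sup_idem]
    · rw [h a, h b, h (a * b)]
      calc (a ⊔ γ ⊥) * (b ⊔ γ ⊥) ≤ a * (b ⊔ γ ⊥) ⊔ γ ⊥ * (b ⊔ γ ⊥) := RL_sup_mul_le _ _ _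
      _ ≤ a * b ⊔ γ ⊥ := by
          refine sup_le ?_ ((RL_mul_le_left _ _).trans le_sup_right)
          rw [ResLat.mul_comm]
          refine (RL_sup_mul_le b (γ ⊥) a).trans (sup_le ?_ ?_)
          · rw [ResLat.mul_comm]; exact le_sup_left
          · exact (RL_mul_le_left _ _).trans le_sup_right
end

section
/- Let A be a bounded commutative integral residuated lattice, γ a nucleus on A, and a ∈ A. Then γ(a) = a if and only if γ(b) ≤ (b → a) → a for all b ∈ A. -/
lemma ResLat.mul_mono_right {A : Type*} [ResLat A] {b c : A} (a : A) (h : b ≤ c) :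
    a * b ≤ a * c := by
  have h1 : c ≤ a ⇨ a * c := by
    rw [← ResLat.residuation, ResLat.mul_comm]
  have h2 : b ≤ a ⇨ a * c := le_trans h h1
  rw [← ResLat.residuation, ResLat.mul_comm] at h2
  exact h2

/-- For a nucleus `γ` and `a ∈ A`: `γ a = a` iff `γ b ≤ (b ⇨ a) ⇨ a` for all `b`. -/
theorem nucleus_fixed_iff {A : Type*} [ResLat A] {γ : A → A}
    (hγ : IsNucleus γ) (a : A) :
    γ a = a ↔ ∀ b : A, γ b ≤ (b ⇨ a) ⇨ a := by
  constructor
  · intro hfix b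
    rw [← ResLat.residuation]
    have h1 : γ b * (b ⇨ a) ≤ γ b * γ (b ⇨ a) :=
      ResLat.mul_mono_right _ (hγ.le_apply _)
    have h2 : γ b * γ (b ⇨ a) ≤ γ (b * (b ⇨ a)) := hγ.mul_le _ _
    have h3 : b * (b ⇨ a) ≤ a := by
      rw [ResLat.mul_comm, ResLat.residuation]
    have h4 : γ (b * (b ⇨ a)) ≤ γ a := hγ.mono _ _ h3
    calc γ b * (b ⇨ a) ≤ γ (b * (b ⇨ a)) := le_trans h1 h2
      _ ≤ γ a := h4
      _ = a := hfix
  · intro h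
    refine le_antisymm ?_ (hγ.le_apply a)
    have h1 : γ a ≤ (a ⇨ a) ⇨ a := h a
    rw [← ResLat.residuation] at h1
    have h2 : (⊤ : A) ≤ a ⇨ a := by
      rw [← ResLat.residuation, ResLat.mul_comm, ResLat.mul_top]
    calc γ a = γ a * ⊤ := (ResLat.mul_top _).symm
      _ ≤ γ a * (a ⇨ a) := ResLat.mul_mono_right _ h2
      _ ≤ a := h1
end

section
/- Let A be a bounded commutative integral residuated lattice and γ a nucleus on A. Then for every a ∈ A, γ(a) is the minimum of the set {(a → b) → b : b ∈ γ(A)}; that is, γ(a) belongs to this set and γ(a) ≤ (a → b) → b for every b in the image γ(A) of γ. -/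
lemma ResLat.mul_le_mul_left {A : Type*} [ResLat A] {a b : A} (c : A) (h : a ≤ b) :
    c * a ≤ c * b := by
  rw [ResLat.mul_comm c a, ResLat.residuation]
  exact le_trans h ((ResLat.residuation b c (c * b)).mp (le_of_eq (ResLat.mul_comm b c)))

/-- For a nucleus `γ`, `γ a` is the minimum of `{(a ⇨ b) ⇨ b : b ∈ γ(A)}`. -/
theorem nucleus_isLeast {A : Type*} [ResLat A] {γ : A → A}
    (hγ : IsNucleus γ) (a : A) :
    IsLeast {c : A | ∃ b ∈ Set.range γ, c = (a ⇨ b) ⇨ b} (γ a) := by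
  have lb : ∀ x : A, γ a ≤ (a ⇨ γ x) ⇨ γ x := by
    intro x
    rw [← ResLat.residuation]
    calc γ a * (a ⇨ γ x) ≤ γ a * γ (a ⇨ γ x) :=
          ResLat.mul_le_mul_left _ (hγ.le_apply _)
      _ ≤ γ (a * (a ⇨ γ x)) := hγ.mul_le _ _
      _ ≤ γ (γ x) := hγ.mono _ _ (by rw [ResLat.mul_comm]; exact (ResLat.residuation _ _ _).mpr le_rfl)
      _ = γ x := hγ.idempotent x
  constructor
  · refine ⟨γ a, ⟨a, rfl⟩, ?_⟩
    apply le_antisymm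
    · exact lb a
    · have htop : a ⇨ γ a = ⊤ := by
        apply le_antisymm le_top
        rw [← ResLat.residuation, ResLat.mul_comm, ResLat.mul_top]
        exact hγ.le_apply a
      rw [htop]
      have := (ResLat.residuation (⊤ ⇨ γ a) ⊤ (γ a)).mpr le_rfl
      rwa [ResLat.mul_top] at this
  · rintro c ⟨b, ⟨x, rfl⟩, rfl⟩
    exact lb x
end

section
/- Let A be a bounded commutative integral residuated lattice and γ : A → A a function. The following are equivalent: (i) γ is a nucleus on A; (ii) there exists a subset B ⊆ A such that for every x ∈ A, γ(x) is the minimum of the set {(x → b) → b : b ∈ B}; (iii) there exists a subset B ⊆ A such that for every x ∈ A, γ(x) is the greatest lower bound of the set {(x → b) → b : b ∈ B}. -/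
namespace ResLatAux
variable {A : Type*} [ResLat A]

lemma res {a b c : A} : a * b ≤ c ↔ a ≤ b ⇨ c := ResLat.residuation a b c

lemma mul_le_mul_right' {a b : A} (c : A) (h : a ≤ b) : a * c ≤ b * c :=
  res.mpr (le_trans h (res.mp (le_refl (b * c))))

lemma mul_le_mul_left' {a b : A} (c : A) (h : a ≤ b) : c * a ≤ c * b := by
  rw [ResLat.mul_comm c a, ResLat.mul_comm c b]; exact mul_le_mul_right' c h

lemma mul_himp_le {a b : A} : a * (a ⇨ b) ≤ b := by
  rw [ResLat.mul_comm]; exact res.mpr le_rfl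

lemma himp_anti {a b : A} (c : A) (h : a ≤ b) : b ⇨ c ≤ a ⇨ c :=
  res.mp (le_trans (mul_le_mul_left' _ h) (res.mpr le_rfl))

lemma le_himp_himp {a b : A} : a ≤ (a ⇨ b) ⇨ b := res.mp mul_himp_le

lemma top_himp (a : A) : ⊤ ⇨ a = a := by
  apply le_antisymm
  · have : (⊤ ⇨ a) * ⊤ ≤ a := res.mpr le_rfl
    rwa [ResLat.mul_top] at this
  · exact res.mp (le_of_eq (ResLat.mul_top a))

lemma nucleus_of_glb {γ : A → A} {B : Set A}
    (h : ∀ x : A, IsGLB {c : A | ∃ b ∈ B, c = (x ⇨ b) ⇨ b} (γ x)) : IsNucleus γ := by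
  have lb : ∀ x, ∀ b ∈ B, γ x ≤ (x ⇨ b) ⇨ b := fun x b hb => (h x).1 ⟨b, hb, rfl⟩
  constructor
  · intro a
    exact (h a).2 fun c ⟨b, hb, hc⟩ => hc ▸ le_himp_himp
  · intro a b hab
    refine (h b).2 fun c ⟨d, hd, hc⟩ => hc ▸ le_trans (lb a d hd) ?_
    exact himp_anti d (himp_anti d hab)
  · intro a
    apply le_antisymm
    · refine (h a).2 fun c ⟨d, hd, hc⟩ => ?_
      subst hc
      have h1 : a ⇨ d ≤ γ a ⇨ d := res.mp (by
        rw [ResLat.mul_comm]; exact res.mpr (lb a d hd))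
      exact le_trans (lb (γ a) d hd) (himp_anti d h1)
    · exact (h (γ a)).2 fun c ⟨d, hd, hc⟩ => hc ▸ le_himp_himp
  · intro a b
    refine (h (a*b)).2 fun c ⟨d, hd, hc⟩ => ?_
    subst hc
    apply res.mp
    set e := (a * b) ⇨ d with he
    have h1 : a * (b * e) ≤ d := by
      rw [← ResLat.mul_assoc]; exact mul_himp_le
    have hbe : b * e ≤ a ⇨ d := res.mp (by rw [ResLat.mul_comm]; exact h1)
    have h2 : γ a * (b * e) ≤ d :=
      le_trans (mul_le_mul_left' _ hbe) (res.mpr (lb a d hd))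
    have hb2 : b * (γ a * e) ≤ d := by
      rw [← ResLat.mul_assoc, ResLat.mul_comm b (γ a), ResLat.mul_assoc]; exact h2
    have h4 : γ a * e ≤ b ⇨ d := res.mp (by rw [ResLat.mul_comm]; exact hb2)
    have h3 : γ b * (γ a * e) ≤ d :=
      le_trans (mul_le_mul_left' _ h4) (res.mpr (lb b d hd))
    calc γ a * γ b * e = γ b * (γ a * e) := by
          rw [ResLat.mul_comm (γ a) (γ b), ResLat.mul_assoc]
      _ ≤ d := h3

lemma least_of_nucleus {γ : A → A} (hγ : IsNucleus γ) (x : A) :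
    IsLeast {c : A | ∃ b ∈ {a : A | γ a = a}, c = (x ⇨ b) ⇨ b} (γ x) := by
  constructor
  · refine ⟨γ x, hγ.idempotent x, ?_⟩
    have htop : ⊤ ≤ x ⇨ γ x :=
      res.mp (by rw [ResLat.mul_comm, ResLat.mul_top]; exact hγ.le_apply x)
    apply le_antisymm
    · apply res.mp
      calc γ x * (x ⇨ γ x) ≤ γ x * ⊤ := mul_le_mul_left' _ le_top
        _ = γ x := ResLat.mul_top _
    · calc (x ⇨ γ x) ⇨ γ x ≤ ⊤ ⇨ γ x := himp_anti _ htop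
        _ = γ x := top_himp _
  · rintro c ⟨b, hb, rfl⟩
    apply res.mp
    calc γ x * (x ⇨ b) ≤ γ x * γ (x ⇨ b) := mul_le_mul_left' _ (hγ.le_apply _)
      _ ≤ γ (x * (x ⇨ b)) := hγ.mul_le _ _
      _ ≤ γ b := hγ.mono _ _ mul_himp_le
      _ = b := hb

end ResLatAux

/-- Description of an arbitrary nucleus: `γ` is a nucleus iff, for some subset `B`,
`γ x` is the minimum of `{(x ⇨ b) ⇨ b : b ∈ B}`, iff, for some subset `B`,
`γ x` is the greatest lower bound of `{(x ⇨ b) ⇨ b : b ∈ B}`. -/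
theorem nucleus_description {A : Type*} [ResLat A] (γ : A → A) :
    (IsNucleus γ ↔
      ∃ B : Set A, ∀ x : A, IsLeast {c : A | ∃ b ∈ B, c = (x ⇨ b) ⇨ b} (γ x)) ∧
    (IsNucleus γ ↔
      ∃ B : Set A, ∀ x : A, IsGLB {c : A | ∃ b ∈ B, c = (x ⇨ b) ⇨ b} (γ x)) := by
  constructor
  · constructor
    · intro hγ
      exact ⟨{a : A | γ a = a}, ResLatAux.least_of_nucleus hγ⟩
    · rintro ⟨B, hB⟩
      exact ResLatAux.nucleus_of_glb (γ := γ) (B := B) fun x => (hB x).isGLB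
  · constructor
    · intro hγ
      exact ⟨{a : A | γ a = a}, fun x => (ResLatAux.least_of_nucleus hγ x).isGLB⟩
    · rintro ⟨B, hB⟩
      exact ResLatAux.nucleus_of_glb hB
end

section
/- Fix a natural number n > 2 and let A_n = {⊥, a_1, …, a_n, ⊤} be the chain ⊥ < a_1 < ⋯ < a_n < ⊤ equipped with the operations: x·y = a_1 if x, y ∉ {⊥, ⊤}, and x·y = min{x, y} otherwise; x → y = ⊤ if x ≤ y, x → y = y if (x > y and y = ⊥) or (x = ⊤ and x > y), and x → y = a_n if ⊤ > x > y > ⊥; together with ∧ = min and ∨ = max. Then A_n is a bounded commutative integral residuated lattice, the map t(x) = (x → x·x) → x·x is a nucleus on A_n, and a_2 < t(a_2) < (a_2 → ⊥) → ⊥; in particular t is distinct from the identity map and from the double negation map x ↦ (x → ⊥) → ⊥. -/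
/-- Product on the chain `⊥ = 0 < a₁ = 1 < ⋯ < aₙ = n < ⊤ = n+1` (as `Fin (n+2)`):
`x * y = a₁` if neither `x` nor `y` is `⊥` or `⊤`, and `x * y = min x y` otherwise. -/
def rmul (n : ℕ) (x y : Fin (n + 2)) : Fin (n + 2) :=
  if x = 0 ∨ y = 0 then 0
  else if x = Fin.last (n + 1) then y
  else if y = Fin.last (n + 1) then x
  else 1

/-- Residuum on the chain `⊥ = 0 < a₁ = 1 < ⋯ < aₙ = n < ⊤ = n+1`. -/
def rimp (n : ℕ) (x y : Fin (n + 2)) : Fin (n + 2) :=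
  if x ≤ y then Fin.last (n + 1)
  else if y = 0 then 0
  else if x = Fin.last (n + 1) then y
  else ⟨n, by omega⟩

/-- The term `t(x) = (x ⇨ x·x) ⇨ x·x`. -/
def tnuc (n : ℕ) (x : Fin (n + 2)) : Fin (n + 2) :=
  rimp n (rimp n x (rmul n x x)) (rmul n x x)

/-! Every axiom is a finite case check on the indices, carried out in `ℕ` through `Fin.val`.
The map `t` fixes `⊥`, `a₁`, `⊤` and sends `a₂, …, aₙ` to `aₙ`; as any product of two middle
elements is `a₁`, it is submultiplicative, and `a₂ < aₙ < ⊤ = ¬¬a₂` once `n > 2`. -/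

namespace ChainNucleus

variable {n : ℕ}

theorem val_rmul (x y : Fin (n + 2)) :
    (rmul n x y : ℕ) =
      if (x : ℕ) = 0 ∨ (y : ℕ) = 0 then 0
      else if (x : ℕ) = n + 1 then (y : ℕ)
      else if (y : ℕ) = n + 1 then (x : ℕ)
      else 1 := by
  simp only [rmul, Fin.ext_iff, Fin.val_zero, Fin.val_last]
  split_ifs <;> simp

theorem val_rimp (x y : Fin (n + 2)) :
    (rimp n x y : ℕ) =
      if (x : ℕ) ≤ y then n + 1
      else if (y : ℕ) = 0 then 0
      else if (x : ℕ) = n + 1 then (y : ℕ)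
      else n := by
  simp only [rimp, Fin.le_def, Fin.ext_iff, Fin.val_zero, Fin.val_last]
  split_ifs <;> simp

/-- For `a₁ < x < ⊤` one has `x·x = a₁` and `x ⇨ a₁ = aₙ ⇨ a₁ = aₙ`. -/
theorem val_tnuc (x : Fin (n + 2)) :
    (tnuc n x : ℕ) = if 1 < (x : ℕ) ∧ (x : ℕ) < n + 1 then n else (x : ℕ) := by
  have := x.isLt
  simp only [tnuc, val_rimp, val_rmul]
  grind

theorem rmul_comm (x y : Fin (n + 2)) : rmul n x y = rmul n y x := by
  simp only [Fin.ext_iff, val_rmul]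
  grind

theorem rmul_assoc (x y z : Fin (n + 2)) :
    rmul n (rmul n x y) z = rmul n x (rmul n y z) := by
  simp only [Fin.ext_iff, val_rmul]
  grind

theorem rmul_last (x : Fin (n + 2)) : rmul n x (Fin.last (n + 1)) = x := by
  simp only [Fin.ext_iff, val_rmul, Fin.val_last]
  grind

theorem rmul_le_iff_le_rimp (x y z : Fin (n + 2)) : rmul n x y ≤ z ↔ x ≤ rimp n y z := by
  have := x.isLt
  have := z.isLt
  simp only [Fin.le_def, val_rmul, val_rimp]
  grind

theorem le_tnuc (x : Fin (n + 2)) : x ≤ tnuc n x := by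
  have := x.isLt
  simp only [Fin.le_def, val_tnuc]
  grind

theorem tnuc_mono : Monotone (tnuc n) := by
  intro x y h
  have := y.isLt
  simp only [Fin.le_def, val_tnuc] at h ⊢
  grind

theorem tnuc_tnuc (x : Fin (n + 2)) : tnuc n (tnuc n x) = tnuc n x := by
  simp only [Fin.ext_iff, val_tnuc]
  grind

theorem rmul_tnuc_le_tnuc_rmul (x y : Fin (n + 2)) :
    rmul n (tnuc n x) (tnuc n y) ≤ tnuc n (rmul n x y) := by
  have := x.isLt
  have := y.isLt
  simp only [Fin.le_def, val_tnuc, val_rmul]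
  grind

theorem val_two (hn : 0 < n) : ((2 : Fin (n + 2)) : ℕ) = 2 :=
  show 2 % (n + 2) = 2 from Nat.mod_eq_of_lt (by omega)

theorem two_lt_tnuc_two (hn : 2 < n) : (2 : Fin (n + 2)) < tnuc n 2 := by
  simp only [Fin.lt_def, val_tnuc, val_two (n := n) (by omega)]
  grind

theorem tnuc_two_lt_rimp_rimp_two_zero (hn : 1 < n) :
    tnuc n 2 < rimp n (rimp n 2 0) 0 := by
  simp only [Fin.lt_def, val_tnuc, val_rimp, Fin.val_zero, val_two (n := n) (by omega)]
  grind

end ChainNucleus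

open ChainNucleus in
/-- For `n > 2`, the chain `Aₙ` with the above operations is a bounded commutative
integral residuated lattice (the lattice being the linear order on `Fin (n+2)` with
`⊥ = 0`, `⊤ = Fin.last (n+1)`), the map `t(x) = (x ⇨ x·x) ⇨ x·x` is a nucleus on it,
and `a₂ < t a₂ < ¬¬a₂`; in particular `t` differs from the identity and from the
double negation. -/
theorem chain_nontrivial_nucleus (n : ℕ) (hn : 2 < n) :
    (∀ x y : Fin (n + 2), rmul n x y = rmul n y x) ∧
    (∀ x y z : Fin (n + 2), rmul n (rmul n x y) z = rmul n x (rmul n y z)) ∧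
    (∀ x : Fin (n + 2), rmul n x (Fin.last (n + 1)) = x) ∧
    (∀ x y z : Fin (n + 2), rmul n x y ≤ z ↔ x ≤ rimp n y z) ∧
    (∀ x : Fin (n + 2), x ≤ tnuc n x) ∧
    (∀ x y : Fin (n + 2), x ≤ y → tnuc n x ≤ tnuc n y) ∧
    (∀ x : Fin (n + 2), tnuc n (tnuc n x) = tnuc n x) ∧
    (∀ x y : Fin (n + 2), rmul n (tnuc n x) (tnuc n y) ≤ tnuc n (rmul n x y)) ∧
    ((2 : Fin (n + 2)) < tnuc n 2 ∧
      tnuc n 2 < rimp n (rimp n 2 0) 0) ∧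
    tnuc n ≠ id ∧
    tnuc n ≠ fun x => rimp n (rimp n x 0) 0 := by
  refine ⟨rmul_comm, rmul_assoc, rmul_last, rmul_le_iff_le_rimp, le_tnuc,
    fun _ _ h => tnuc_mono h, tnuc_tnuc, rmul_tnuc_le_tnuc_rmul,
    ⟨two_lt_tnuc_two hn, tnuc_two_lt_rimp_rimp_two_zero (by omega)⟩, fun h => ?_, fun h => ?_⟩
  · exact (two_lt_tnuc_two hn).ne' (congrFun h 2)
  · exact (tnuc_two_lt_rimp_rimp_two_zero (by omega)).ne (congrFun h 2)
end

section
/- Let S be the BL-chain S_{1,ω} with universe {⊥} ∪ {a^k : k ∈ ℕ} (where a^0 = ⊤) and order ⊥ < ⋯ < a^2 < a^1 < ⊤, with operations a^i·a^j = a^{i+j}, ⊥·x = x·⊥ = ⊥, a^i → a^j = a^{max(j−i,0)}, a^i → ⊥ = ⊥, ⊥ → x = ⊤, and lattice operations min and max (this is a bounded commutative integral residuated lattice). Suppose γ is a nucleus on S such that γ(⊥) = ⊥ and, for every x ∈ S, γ(x) belongs to the subuniverse generated by x (the smallest subset of S containing x, ⊥, ⊤ and closed under ∧, ∨, ·, →).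 Then either γ is the identity map or γ(x) = (x → ⊥) → ⊥ for all x (i.e., γ(⊥) = ⊥ and γ(a^k) = ⊤ for all k ≥ 1). -/
/-- Universe of the BL-chain `S₁,ω`: `none` is `⊥` and `some k` is `aᵏ`
(so `some 0 = ⊤`), with order `⊥ < ⋯ < a² < a¹ < ⊤`. -/
abbrev Somega := Option ℕ

/-- The order on `S₁,ω`: `⊥` is below everything and `aⁱ ≤ aʲ ↔ j ≤ i`. -/
def sle : Somega → Somega → Prop
  | none, _ => True
  | some _, none => False
  | some i, some j => j ≤ i

/-- Product: `aⁱ · aʲ = a^(i+j)`, and `⊥ · x = x · ⊥ = ⊥`. -/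
def smul : Somega → Somega → Somega
  | none, _ => none
  | some _, none => none
  | some i, some j => some (i + j)

/-- Residuum: `aⁱ ⇨ aʲ = a^(max (j - i) 0)`, `aⁱ ⇨ ⊥ = ⊥`, `⊥ ⇨ x = ⊤`. -/
def shimp : Somega → Somega → Somega
  | none, _ => some 0
  | some _, none => none
  | some i, some j => some (j - i)

/-- Lattice meet (`min` in the order: larger exponent is smaller). -/
def sinf : Somega → Somega → Somega
  | none, _ => none
  | some _, none => none
  | some i, some j => some (max i j)

/-- Lattice join (`max` in the order). -/
def ssup : Somega → Somega → Somega
  | none, b => b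
  | some i, none => some i
  | some i, some j => some (min i j)

/-- The subuniverse of `S₁,ω` generated by `x`: the smallest subset containing
`x`, `⊥`, `⊤` and closed under `∧`, `∨`, `·`, `⇨`. -/
inductive sgen (x : Somega) : Somega → Prop
  | base : sgen x x
  | bot : sgen x none
  | top : sgen x (some 0)
  | mul {a b : Somega} : sgen x a → sgen x b → sgen x (smul a b)
  | imp {a b : Somega} : sgen x a → sgen x b → sgen x (shimp a b)
  | inf {a b : Somega} : sgen x a → sgen x b → sgen x (sinf a b)
  | sup {a b : Somega} : sgen x a → sgen x b → sgen x (ssup a b)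

lemma sgen_dvd (k : ℕ) : ∀ y, sgen (some k) y → y = none ∨ ∃ m, y = some m ∧ k ∣ m := by
  intro y h
  induction h with
  | base => exact Or.inr ⟨k, rfl, dvd_refl k⟩
  | bot => exact Or.inl rfl
  | top => exact Or.inr ⟨0, rfl, dvd_zero k⟩
  | mul ha hb iha ihb =>
    rcases iha with rfl | ⟨m, rfl, hm⟩
    · exact Or.inl rfl
    rcases ihb with rfl | ⟨n, rfl, hn⟩
    · exact Or.inl rfl
    exact Or.inr ⟨m + n, rfl, dvd_add hm hn⟩
  | imp ha hb iha ihb =>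
    rcases iha with rfl | ⟨m, rfl, hm⟩
    · exact Or.inr ⟨0, rfl, dvd_zero k⟩
    rcases ihb with rfl | ⟨n, rfl, hn⟩
    · exact Or.inl rfl
    exact Or.inr ⟨n - m, rfl, Nat.dvd_sub hn hm⟩
  | inf ha hb iha ihb =>
    rcases iha with rfl | ⟨m, rfl, hm⟩
    · exact Or.inl rfl
    rcases ihb with rfl | ⟨n, rfl, hn⟩
    · exact Or.inl rfl
    exact Or.inr ⟨max m n, rfl, by rcases max_choice m n with h | h <;> rw [h] <;> assumption⟩
  | sup ha hb iha ihb =>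
    rcases iha with rfl | ⟨m, rfl, hm⟩
    · rcases ihb with rfl | ⟨n, rfl, hn⟩
      · exact Or.inl rfl
      · exact Or.inr ⟨n, rfl, hn⟩
    rcases ihb with rfl | ⟨n, rfl, hn⟩
    · exact Or.inr ⟨m, rfl, hm⟩
    exact Or.inr ⟨min m n, rfl, by rcases min_choice m n with h | h <;> rw [h] <;> assumption⟩

lemma sle_top_eq {y : Somega} (h : sle (some 0) y) : y = some 0 := by
  cases y with
  | none => exact absurd h (by simp [sle])
  | some j => simp [sle] at h; simp [h]

/-- On the BL-chain `S₁,ω`, every nucleus `γ` with `γ ⊥ = ⊥` such that `γ x`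
lies in the subuniverse generated by `x` is either the identity or the double
negation `x ↦ (x ⇨ ⊥) ⇨ ⊥`. -/
theorem S1omega_trivial_nuclei (γ : Somega → Somega)
    (h1 : ∀ x, sle x (γ x))
    (h2 : ∀ x y, sle x y → sle (γ x) (γ y))
    (h3 : ∀ x, γ (γ x) = γ x)
    (h4 : ∀ x y, sle (smul (γ x) (γ y)) (γ (smul x y)))
    (hbot : γ none = none)
    (hgen : ∀ x, sgen x (γ x)) :
    (∀ x, γ x = x) ∨ (∀ x, γ x = shimp (shimp x none) none) := by
  -- γ ⊤ = ⊤
  have htop : γ (some 0) = some 0 := sle_top_eq (h1 (some 0))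
  -- For k ≥ 1, γ (aᵏ) is aᵏ or ⊤
  have hkey : ∀ k : ℕ, γ (some k) = some k ∨ γ (some k) = some 0 := by
    intro k
    rcases sgen_dvd k _ (hgen (some k)) with hn | ⟨m, hm, hdvd⟩
    · have := h1 (some k); rw [hn] at this; exact absurd this (by simp [sle])
    · have hle := h1 (some k); rw [hm] at hle
      have hmk : m ≤ k := hle
      rcases Nat.eq_zero_or_pos m with h0 | hpos
      · right; rw [hm, h0]
      · left; rw [hm]
        have := Nat.le_of_dvd hpos hdvd
        congr 1
        omega
  rcases hkey 1 with hone | hone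
  · -- identity case
    left
    intro x
    cases x with
    | none => exact hbot
    | some k =>
      cases k with
      | zero => exact htop
      | succ n =>
        rcases hkey (n + 1) with h | h
        · exact h
        · have hm := h2 (some (n + 1)) (some 1) (by simp [sle])
          rw [h, hone] at hm
          simp [sle] at hm
  · -- double negation case
    right
    have hall : ∀ k : ℕ, γ (some (k + 1)) = some 0 := by
      intro k
      induction k with
      | zero => exact hone
      | succ n ih =>
        have := h4 (some 1) (some (n + 1))
        rw [hone, ih] at this
        have h12 : smul (some 1) (some (n + 1)) = some (n + 1 + 1) := by
          simp [smul]; omega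
        rw [h12] at this
        exact sle_top_eq this
    intro x
    cases x with
    | none => rw [hbot]; rfl
    | some k =>
      cases k with
      | zero => rw [htop]; rfl
      | succ n => rw [hall n]; rfl
end
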